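/- arXiv:0911.1025 — 7 statements merged into one kernel-verified Lean document; each statement's English description precedes it below -/
import Mathlib

section
/- The generating function of the spread polynomials satisfies ∑_{n≥0} Sₙ(s) tⁿ = t·s·(1+t) / ((1-t)(1-2t+t²+4ts)) as an identity of formal power series. -/
/-! Multiplying the recurrence `Sₙ₊₂ - 2(1-2s)Sₙ₊₁ + Sₙ = 2s` by `tⁿ⁺²` and summing gives
`(1 - 2(1-2s)t + t²) · ∑ Sₙ tⁿ = st + 2st²/(1-t)`; clearing the geometric series `1/(1-t)`
gives the identity. -/

open Polynomial PowerSeries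

noncomputable def spreadPoly : ℕ → Polynomial ℚ
  | 0 => 0
  | 1 => Polynomial.X
  | (n + 2) => 2 * (1 - 2 * Polynomial.X) * spreadPoly (n + 1) - spreadPoly n
      + 2 * Polynomial.X

namespace PowerSeries

variable {R : Type*} [CommRing R]

theorem mk_eq_C_add_X_mul_mk_succ (a : ℕ → R) :
    mk a = C (a 0) + X * mk (fun n => a (n + 1)) := by
  rw [add_comm, (mk a).eq_X_mul_shift_add_const]
  simp

theorem one_sub_C_mul_X_add_X_sq_mul_mk {a : ℕ → R} {c d : R}
    (h : ∀ n, a (n + 2) = c * a (n + 1) - a n + d) :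
    (1 - C c * X + X ^ 2) * mk a = C (a 0) + C (a 1 - c * a 0) * X + C d * X ^ 2 * mk 1 := by
  have h₀ := mk_eq_C_add_X_mul_mk_succ a
  have h₁ : mk (fun n => a (n + 1)) = C (a 1) + X * mk (fun n => a (n + 2)) :=
    mk_eq_C_add_X_mul_mk_succ _
  have h₂ : mk (fun n => a (n + 2)) = C c * mk (fun n => a (n + 1)) - mk a + C d * mk 1 := by
    ext n
    simp [h, coeff_C_mul]
  rw [map_sub, map_mul]
  linear_combination (1 - C c * X) * h₀ + X * h₁ + X ^ 2 * h₂

end PowerSeries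

/-- Generating function of the spread polynomials, as formal power series in `t`
over `ℚ[s]`:  `(1-t)(1-2t+t²+4ts) · ∑ Sₙ(s) tⁿ = t·s·(1+t)`. -/
theorem spreadPoly_generatingFunction :
    (1 - PowerSeries.X) *
      (1 - 2 * PowerSeries.X + PowerSeries.X ^ 2 +
        4 * PowerSeries.X * PowerSeries.C (R := Polynomial ℚ) Polynomial.X) *
      PowerSeries.mk (fun n => spreadPoly n) =
    PowerSeries.X * PowerSeries.C (R := Polynomial ℚ) Polynomial.X *
      (1 + PowerSeries.X) := by
  have hS := one_sub_C_mul_X_add_X_sq_mul_mk (a := spreadPoly) (c := 2 * (1 - 2 * Polynomial.X))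
    (d := 2 * Polynomial.X) fun _ => rfl
  simp only [spreadPoly, mul_zero, sub_zero, map_zero, zero_add, map_mul, map_sub, map_one,
    map_ofNat] at hS
  linear_combination (1 - PowerSeries.X) * hS +
    2 * PowerSeries.C Polynomial.X * PowerSeries.X ^ 2 * mk_one_mul_one_sub_eq_one (Polynomial ℚ)
end

section
/- For every natural number n, S₆ₙ(1/4) = 0; more precisely the sequence Sₙ(1/4) for n = 0,…,6 is 0, 1/4, 3/4, 1, 3/4, 1/4, 0 and is periodic with period 6. -/
def spread : ℕ → ℚ → ℚ
  | 0, _ => 0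
  | 1, s => s
  | (n + 2), s => 2 * (1 - 2 * s) * spread (n + 1) s - spread n s + 2 * s

/-- Three steps of the recursion give `u (n + 3) = 2 c - u n`; applying this twice returns `u n`. -/
theorem Function.periodic_six_of_add_two_eq {G : Type*} [AddCommGroup G] {u : ℕ → G} {c : G}
    (h : ∀ n, u (n + 2) = u (n + 1) - u n + c) : Function.Periodic u 6 := by
  have add_three : ∀ n, u (n + 3) = c + c - u n := fun n => by
    rw [h (n + 1), h n]; abel
  intro n
  rw [add_three (n + 3), add_three n]; abel

theorem spread_quarter_add_two (n : ℕ) :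
    spread (n + 2) (1/4) = spread (n + 1) (1/4) - spread n (1/4) + 1/2 := by
  rw [spread]; ring

theorem spread_quarter_periodic :
    (∀ n : ℕ, spread (6 * n) (1/4) = 0) ∧
    spread 0 (1/4) = 0 ∧ spread 1 (1/4) = 1/4 ∧ spread 2 (1/4) = 3/4 ∧
    spread 3 (1/4) = 1 ∧ spread 4 (1/4) = 3/4 ∧ spread 5 (1/4) = 1/4 ∧
    spread 6 (1/4) = 0 ∧
    (∀ n : ℕ, spread (n + 6) (1/4) = spread n (1/4)) := by
  have periodic : Function.Periodic (spread · (1/4)) 6 :=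
    Function.periodic_six_of_add_two_eq spread_quarter_add_two
  refine ⟨fun n => ?_, ?_, ?_, ?_, ?_, ?_, ?_, ?_, periodic⟩
  · rw [mul_comm]; exact (periodic.nat_mul_eq n).trans rfl
  all_goals norm_num [spread_quarter_add_two, spread]
end

section
/- For each of the special spreads s ∈ {0, 1/4, 1/2, 3/4, 1} and every natural number n, the value Sₙ(s) also lies in {0, 1/4, 1/2, 3/4, 1}. -/
theorem spread_add_two (n : ℕ) (s : ℚ) :
    spread (n + 2) s = 2 * (1 - 2 * s) * spread (n + 1) s - spread n s + 2 * s := rfl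

theorem spread_periodic {s : ℚ} {p : ℕ} (h₀ : spread p s = 0) (h₁ : spread (p + 1) s = s) :
    Function.Periodic (spread · s) p := by
  suffices ∀ n, spread (n + p) s = spread n s ∧ spread (n + 1 + p) s = spread (n + 1) s from
    fun n => (this n).1
  intro n
  induction n with
  | zero => simpa [add_comm 1 p] using ⟨h₀, h₁⟩
  | succ n ih =>
    refine ⟨ih.2, ?_⟩
    rw [show n + 1 + 1 + p = n + p + 2 by omega, spread_add_two,
      show n + p + 1 = n + 1 + p by omega, ih.1, ih.2, spread_add_two]

theorem spread_special_spreads (s : ℚ)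
    (hs : s ∈ ({0, 1/4, 1/2, 3/4, 1} : Set ℚ)) (n : ℕ) :
    spread n s ∈ ({0, 1/4, 1/2, 3/4, 1} : Set ℚ) := by
  simp only [Set.mem_insert_iff, Set.mem_singleton_iff] at hs ⊢
  have hperiodic : Function.Periodic (spread · s) 12 := by
    apply spread_periodic <;> rcases hs with rfl | rfl | rfl | rfl | rfl <;> norm_num [spread]
  rw [← hperiodic.map_mod_nat n]
  have hlt : n % 12 < 12 := Nat.mod_lt n (by norm_num)
  interval_cases n % 12 <;> rcases hs with rfl | rfl | rfl | rfl | rfl <;> norm_num [spread]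
end

section
/- For every natural number n ≥ 1, the rational number 3ⁿ · Sₙ(1/3) is an integer not divisible by 3; moreover for even n it is divisible by 2 and for odd n it is odd. -/
def spreadNum (p q : ℤ) : ℕ → ℤ
  | 0 => 0
  | 1 => p
  | (n + 2) =>
    2 * (q - 2 * p) * spreadNum p q (n + 1) - q ^ 2 * spreadNum p q n + 2 * p * q ^ (n + 1)

theorem pow_mul_spread_div_eq_spreadNum (p q : ℤ) (hq : q ≠ 0) :
    ∀ n : ℕ, (q : ℚ) ^ n * spread n (p / q) = spreadNum p q n
  | 0 => by simp [spread, spreadNum]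
  | 1 => by simp [spread, spreadNum, mul_div_cancel₀ _ (Int.cast_ne_zero.mpr hq : (q : ℚ) ≠ 0)]
  | (n + 2) => by
    rw [spread, spreadNum]
    push_cast
    rw [← pow_mul_spread_div_eq_spreadNum p q hq (n + 1),
      ← pow_mul_spread_div_eq_spreadNum p q hq n]
    field_simp
    ring

theorem intCast_spreadNum_succ_zmod (p : ℤ) (q : ℕ) :
    ∀ n : ℕ, (spreadNum p q (n + 1) : ZMod q) = p * (-4 * p) ^ n
  | 0 => by simp [spreadNum]
  | (n + 1) => by
    rw [spreadNum]
    push_cast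
    rw [intCast_spreadNum_succ_zmod p q n, ZMod.natCast_self]
    ring

theorem intCast_spreadNum_zmod_two (p q : ℤ) (hq : Odd q) :
    ∀ n : ℕ, (spreadNum p q n : ZMod 2) = n * p
  | 0 => by simp [spreadNum]
  | 1 => by simp [spreadNum]
  | (n + 2) => by
    rw [spreadNum]
    push_cast
    rw [intCast_spreadNum_zmod_two p q hq n, ZMod.intCast_eq_one_iff_odd.mpr hq]
    reduce_mod_char

theorem spread_third_numerator (n : ℕ) (hn : 1 ≤ n) :
    ∃ z : ℤ, (3 : ℚ) ^ n * spread n (1/3) = (z : ℚ) ∧ ¬ (3 : ℤ) ∣ z ∧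
      (Even n → (2 : ℤ) ∣ z) ∧ (Odd n → Odd z) := by
  have h3 : Odd (3 : ℤ) := by decide
  refine ⟨spreadNum 1 3 n, by simpa using pow_mul_spread_div_eq_spreadNum 1 3 (by norm_num) n,
    ?_, ?_, ?_⟩
  · obtain ⟨m, rfl⟩ := Nat.exists_eq_add_of_le' hn
    intro hdvd
    have hmod := intCast_spreadNum_succ_zmod 1 3 m
    rw [Nat.cast_ofNat, (ZMod.intCast_zmod_eq_zero_iff_dvd _ 3).mpr hdvd] at hmod
    exact pow_ne_zero m (by decide : (-4 : ZMod 3) ≠ 0) (by simpa using hmod.symm)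
  · intro he
    rw [← even_iff_two_dvd, ← ZMod.intCast_eq_zero_iff_even, intCast_spreadNum_zmod_two 1 3 h3,
      ZMod.natCast_eq_zero_iff_even.mpr he, zero_mul]
  · intro ho
    rw [← ZMod.intCast_eq_one_iff_odd, intCast_spreadNum_zmod_two 1 3 h3,
      ZMod.natCast_eq_one_iff_odd.mpr ho, Int.cast_one, one_mul]
end

section
/- Projective triple quad formula: Let F be a field of characteristic ≠ 2 with a nondegenerate symmetric bilinear form B on F², and let U, V, W ∈ F² be vectors with B(U,U), B(V,V), B(W,W) all nonzero. Define q_w = 1 - B(U,V)²/(B(U,U)B(V,V)), q_u = 1 - B(V,W)²/(B(V,V)B(W,W)), q_v = 1 - B(U,W)²/(B(U,U)B(W,W)). Then (q_u + q_v + q_w)² = 2(q_u² + q_v² + q_w²) + 4 q_u q_v q_w. -/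
/-!
Three vectors in a plane are linearly dependent, so their Gram matrix with respect to `B` is
singular. For a symmetric form this says `a b c + 2 x y z - a x² - b y² - c z² = 0` in terms of
the quadrances `a, b, c` and the mutual products `x, y, z`; clearing denominators, the triple
quad formula for the projective quadrances `1 - x² / (b c)`, … is this identity multiplied by
`a x² + b y² + c z² + 2 x y z - a b c`.
-/

theorem LinearMap.BilinForm.det_gram_eq_zero_of_not_linearIndependent {R M ι : Type*}
    [CommRing R] [IsDomain R] [AddCommGroup M] [Module R M] [Fintype ι] [DecidableEq ι]
    (B : LinearMap.BilinForm R M) {v : ι → M} (hv : ¬LinearIndependent R v) :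
    (Matrix.of fun i j => B (v i) (v j)).det = 0 := by
  obtain ⟨g, hg, i, hgi⟩ := Fintype.not_linearIndependent_iff.mp hv
  refine Matrix.exists_mulVec_eq_zero_iff.mp ⟨g, fun h => hgi (congrFun h i), ?_⟩
  funext k
  calc (Matrix.of fun i j => B (v i) (v j)).mulVec g k = B (v k) (∑ j, g j • v j) := by
        simp [Matrix.mulVec, dotProduct, mul_comm]
    _ = 0 := by rw [hg, map_zero]

theorem LinearMap.BilinForm.det_gram_fin_three {R M : Type*} [CommRing R] [AddCommGroup M]
    [Module R M] (B : LinearMap.BilinForm R M) (hB : ∀ x y, B x y = B y x) (u v w : M) :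
    (Matrix.of fun i j => B (![u, v, w] i) (![u, v, w] j)).det =
      B u u * B v v * B w w + 2 * B u v * B v w * B u w
        - B u u * B v w ^ 2 - B v v * B u w ^ 2 - B w w * B u v ^ 2 := by
  rw [Matrix.det_fin_three]
  simp only [Matrix.of_apply, Matrix.cons_val_zero, Matrix.cons_val_one, Matrix.cons_val_two,
    Matrix.tail_cons, Matrix.head_cons]
  rw [hB v u, hB w u, hB w v]
  ring

theorem triple_quad_formula {F : Type*} [Field F] {a b c x y z : F}
    (ha : a ≠ 0) (hb : b ≠ 0) (hc : c ≠ 0)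
    (hdet : a * b * c + 2 * z * x * y - a * x ^ 2 - b * y ^ 2 - c * z ^ 2 = 0) :
    let qx := 1 - x ^ 2 / (b * c)
    let qy := 1 - y ^ 2 / (a * c)
    let qz := 1 - z ^ 2 / (a * b)
    (qx + qy + qz) ^ 2 = 2 * (qx ^ 2 + qy ^ 2 + qz ^ 2) + 4 * qx * qy * qz := by
  dsimp only
  field_simp
  linear_combination (a * x ^ 2 + b * y ^ 2 + c * z ^ 2 + 2 * x * y * z - a * b * c) * hdet

theorem projective_triple_quad_formula_general {F : Type*} [Field F]
    (B : LinearMap.BilinForm F (Fin 2 → F))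
    (hsymm : ∀ x y, B x y = B y x)
    (U V W : Fin 2 → F)
    (hU : B U U ≠ 0) (hV : B V V ≠ 0) (hW : B W W ≠ 0) :
    let qw := 1 - (B U V) ^ 2 / (B U U * B V V)
    let qu := 1 - (B V W) ^ 2 / (B V V * B W W)
    let qv := 1 - (B U W) ^ 2 / (B U U * B W W)
    (qu + qv + qw) ^ 2 = 2 * (qu ^ 2 + qv ^ 2 + qw ^ 2) + 4 * qu * qv * qw := by
  have hdep : ¬LinearIndependent F ![U, V, W] := fun h => by
    simpa using h.fintype_card_le_finrank
  have hdet := B.det_gram_eq_zero_of_not_linearIndependent hdep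
  rw [B.det_gram_fin_three hsymm] at hdet
  exact triple_quad_formula hU hV hW hdet

theorem projective_triple_quad_formula {F : Type*} [Field F]
    (hchar : (2 : F) ≠ 0)
    (B : LinearMap.BilinForm F (Fin 2 → F))
    (hsymm : ∀ x y, B x y = B y x) (hnd : B.Nondegenerate)
    (U V W : Fin 2 → F)
    (hU : B U U ≠ 0) (hV : B V V ≠ 0) (hW : B W W ≠ 0) :
    let qw := 1 - (B U V) ^ 2 / (B U U * B V V)
    let qu := 1 - (B V W) ^ 2 / (B V V * B W W)
    let qv := 1 - (B U W) ^ 2 / (B U U * B W W)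
    (qu + qv + qw) ^ 2 = 2 * (qu ^ 2 + qv ^ 2 + qw ^ 2) + 4 * qu * qv * qw :=
  projective_triple_quad_formula_general B hsymm U V W hU hV hW
end

section
/- For any rational number s = a/b in lowest terms and any prime p not dividing b, there exist infinitely many n such that the p-adic valuation of Sₙ(s) is positive, i.e. p divides Sₙ(s) (as a rational number with denominator prime to p). -/
/-!
The recurrence has integer coefficients, so it makes sense in any commutative ring, and
reduction modulo `p` (through `ℤ_[p]`, which contains `s` because `p ∤ den s`) commutes with it.
Modulo `p` the pair `(Sₙ, Sₙ₊₁)` evolves by an invertible affine map of the finite set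
`(ℤ/p)²`, so the orbit of `(S₀, S₁) = (0, s)` is periodic: `Sₙ ≡ S₀ = 0` whenever the period
divides `n`.
-/

open Function

section SpreadSeq

variable {R S : Type*} [CommRing R] [CommRing S]

def spreadSeq (t : R) : ℕ → R
  | 0 => 0
  | 1 => t
  | n + 2 => 2 * (1 - 2 * t) * spreadSeq t (n + 1) - spreadSeq t n + 2 * t

theorem spreadSeq_rat (s : ℚ) : ∀ n, spreadSeq s n = spread n s
  | 0 => rfl
  | 1 => rfl
  | n + 2 => by
    rw [spreadSeq, spread, spreadSeq_rat s (n + 1), spreadSeq_rat s n]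

theorem map_spreadSeq (f : R →+* S) (t : R) : ∀ n, f (spreadSeq t n) = spreadSeq (f t) n
  | 0 => map_zero f
  | 1 => rfl
  | n + 2 => by
    simp only [spreadSeq, map_add, map_sub, map_mul, map_one, map_ofNat,
      map_spreadSeq f t (n + 1), map_spreadSeq f t n]

def spreadStep (t : R) (v : R × R) : R × R :=
  (v.2, 2 * (1 - 2 * t) * v.2 - v.1 + 2 * t)

theorem spreadStep_injective (t : R) : Injective (spreadStep t) := by
  rintro ⟨a, b⟩ ⟨a', b'⟩ h
  simp only [spreadStep, Prod.mk.injEq] at h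
  obtain ⟨rfl, h⟩ := h
  simp only [Prod.mk.injEq, and_true]
  linear_combination -h

theorem spreadStep_iterate (t : R) :
    ∀ n, (spreadStep t)^[n] (0, t) = (spreadSeq t n, spreadSeq t (n + 1))
  | 0 => rfl
  | n + 1 => by
    rw [iterate_succ_apply', spreadStep_iterate t n]
    rfl

theorem infinite_setOf_spreadSeq_eq_zero [Finite R] (t : R) :
    {n : ℕ | 1 ≤ n ∧ spreadSeq t n = 0}.Infinite := by
  obtain ⟨T, hT, hper⟩ := (spreadStep_injective t).mem_periodicPts (0, t)
  refine Set.infinite_of_forall_exists_gt fun a => ⟨T * (a + 1), ⟨?_, ?_⟩, ?_⟩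
  · nlinarith
  · have h := (hper.mul_const (a + 1)).eq
    rw [spreadStep_iterate] at h
    exact congrArg Prod.fst h
  · nlinarith

end SpreadSeq

section Padic

variable {p : ℕ} [Fact p.Prime]

theorem PadicInt.p_dvd_of_toZMod_eq_zero {x : ℤ_[p]} (hx : toZMod x = 0) : (p : ℤ_[p]) ∣ x := by
  rwa [← RingHom.mem_ker, ker_toZMod, maximalIdeal_eq_span_p, Ideal.mem_span_singleton] at hx

theorem Rat.exists_eq_mul_div_of_padicInt_dvd {q : ℚ} {x : ℤ_[p]} (hqx : (q : ℚ_[p]) = x)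
    (hx : (p : ℤ_[p]) ∣ x) : ∃ c d : ℤ, ¬ (p : ℤ) ∣ d ∧ q = p * (c / d) := by
  obtain ⟨y, rfl⟩ := hx
  have hp : p ≠ 0 := (Fact.out : p.Prime).ne_zero
  have hy : ((q / p : ℚ) : ℚ_[p]) = y := by
    rw [Rat.cast_div, hqx, PadicInt.coe_mul, PadicInt.coe_natCast, Rat.cast_natCast,
      mul_div_cancel_left₀ _ (by exact_mod_cast hp)]
  have hden : ¬ p ∣ (q / p).den := by
    rw [← Rat.padicValuation_le_one_iff, ← Padic.norm_rat_le_one_iff_padicValuation_le_one, hy]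
    exact y.norm_le_one
  refine ⟨(q / p).num, (q / p).den, by exact_mod_cast hden, ?_⟩
  rw [Int.cast_natCast, Rat.num_div_den]
  field_simp

end Padic

/-- A rational `α` is divisible by the prime `p` when `α = p·(c/d)` with `d`
prime to `p`. For any rational `s` whose denominator is prime to `p`, the
prime `p` divides `Sₙ(s)` for infinitely many `n ≥ 1`. -/
theorem spread_divisible_infinitely_often (s : ℚ) (p : ℕ) (hp : p.Prime)
    (hden : ¬ (p : ℤ) ∣ (s.den : ℤ)) :
    {n : ℕ | 1 ≤ n ∧ ∃ c d : ℤ, ¬ (p : ℤ) ∣ d ∧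
      spread n s = (p : ℚ) * ((c : ℚ) / (d : ℚ))}.Infinite := by
  have : Fact p.Prime := ⟨hp⟩
  let σ : ℤ_[p] := ⟨s, Padic.norm_rat_le_one (by exact_mod_cast hden)⟩
  refine (infinite_setOf_spreadSeq_eq_zero (PadicInt.toZMod σ)).mono ?_
  rintro n ⟨hn, hzero⟩
  refine ⟨hn, Rat.exists_eq_mul_div_of_padicInt_dvd (x := spreadSeq σ n) ?_ ?_⟩
  · calc (spread n s : ℚ_[p]) = Rat.castHom ℚ_[p] (spreadSeq s n) := by rw [spreadSeq_rat]; rfl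
      _ = spreadSeq (s : ℚ_[p]) n := map_spreadSeq _ _ _
      _ = PadicInt.Coe.ringHom (spreadSeq σ n) := (map_spreadSeq PadicInt.Coe.ringHom σ n).symm
  · exact PadicInt.p_dvd_of_toZMod_eq_zero (by rwa [map_spreadSeq])
end

section
/- Spread number theorem (finite field version): Let p be an odd prime, k ∈ 𝔽ₚ nonzero, and q ∈ 𝔽ₚ. There exist a, b ∈ 𝔽ₚ with a² + kb² ≠ 0 and kb²/(a² + kb²) = q if and only if q(1-q) = k r² for some r ∈ 𝔽ₚ. -/
/-!
If `q = k b² / (a² + k b²)` then `1 - q = a² / (a² + k b²)`, so `q (1 - q) = k (a b / (a² + k b²))²`.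
Conversely, if `q (1 - q) = k r²` and `q ≠ 1`, then `(a, b) = (1 - q, r)` gives
`a² + k b² = (1 - q)² + q (1 - q) = 1 - q`, hence `k b² / (a² + k b²) = q`; the value `q = 1` comes
from `(a, b) = (0, 1)`.
-/

section Field

variable {F : Type*} [Field F] {k q r : F}

theorem spread_mul_one_sub_spread {a b : F} (hs : a ^ 2 + k * b ^ 2 ≠ 0) :
    k * b ^ 2 / (a ^ 2 + k * b ^ 2) * (1 - k * b ^ 2 / (a ^ 2 + k * b ^ 2)) =
      k * (a * b / (a ^ 2 + k * b ^ 2)) ^ 2 := by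
  field_simp
  ring

theorem one_sub_sq_add_mul_sq_eq_one_sub (hr : q * (1 - q) = k * r ^ 2) :
    (1 - q) ^ 2 + k * r ^ 2 = 1 - q := by
  rw [← hr]
  ring

theorem exists_spread_eq_of_mul_one_sub_eq (hk : k ≠ 0) (hr : q * (1 - q) = k * r ^ 2) :
    ∃ a b : F, a ^ 2 + k * b ^ 2 ≠ 0 ∧ k * b ^ 2 / (a ^ 2 + k * b ^ 2) = q := by
  by_cases hq : q = 1
  · exact ⟨0, 1, by simpa using hk, by simp [hq, hk]⟩
  · have h1q : 1 - q ≠ 0 := sub_ne_zero.mpr (Ne.symm hq)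
    refine ⟨1 - q, r, ?_, ?_⟩
    all_goals rw [one_sub_sq_add_mul_sq_eq_one_sub hr]
    · exact h1q
    · rw [← hr, mul_div_cancel_right₀ q h1q]

end Field

theorem spread_number_theorem_general (p : ℕ)
    [Fact p.Prime] (k q : ZMod p) (hk : k ≠ 0) :
    (∃ a b : ZMod p, a ^ 2 + k * b ^ 2 ≠ 0 ∧
        k * b ^ 2 / (a ^ 2 + k * b ^ 2) = q) ↔
      ∃ r : ZMod p, q * (1 - q) = k * r ^ 2 := by
  constructor
  · rintro ⟨a, b, hs, rfl⟩
    exact ⟨a * b / (a ^ 2 + k * b ^ 2), spread_mul_one_sub_spread hs⟩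
  · rintro ⟨r, hr⟩
    exact exists_spread_eq_of_mul_one_sub_eq hk hr

theorem spread_number_theorem (p : ℕ) (hp : p.Prime) (hodd : p ≠ 2)
    [Fact p.Prime] (k q : ZMod p) (hk : k ≠ 0) :
    (∃ a b : ZMod p, a ^ 2 + k * b ^ 2 ≠ 0 ∧
        k * b ^ 2 / (a ^ 2 + k * b ^ 2) = q) ↔
      ∃ r : ZMod p, q * (1 - q) = k * r ^ 2 :=
  spread_number_theorem_general p k q hk
end
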